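/- Let M be a matroid on a finite linearly ordered set E, and fix a linear order. The number of bases of M with internal activity 1 and external activity 0 equals β(M), the beta invariant of M; in particular this number is independent of the chosen linear order on E. -/

import Mathlib

namespace AB
open Set

variable {α : Type*}

/-- A circuit of a matroid: a minimal dependent set. -/
def Circuit (M : Matroid α) (C : Set α) : Prop :=
  M.Dep C ∧ ∀ D, D ⊂ C → M.Indep D

/-- A cocircuit: a circuit of the dual matroid. -/
def Cocircuit (M : Matroid α) (C : Set α) : Prop := Circuit M✶ C

/-- `b` is internally active for the basis `B`: `b ∈ B` and `b` is the minimum of the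
fundamental cocircuit `C*(B;b)`, the unique cocircuit contained in `(M.E \ B) ∪ {b}`. -/
def IntActive [LinearOrder α] (M : Matroid α) (B : Set α) (b : α) : Prop :=
  b ∈ B ∧ ∃ C, Cocircuit M C ∧ C ⊆ (M.E \ B) ∪ {b} ∧ b ∈ C ∧ ∀ x ∈ C, b ≤ x

/-- `e` is externally active for the basis `B`: `e ∈ M.E \ B` and `e` is the minimum of the
fundamental circuit `C(B;e)`, the unique circuit contained in `B ∪ {e}`. -/
def ExtActive [LinearOrder α] (M : Matroid α) (B : Set α) (e : α) : Prop :=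
  e ∈ M.E \ B ∧ ∃ C, Circuit M C ∧ C ⊆ B ∪ {e} ∧ e ∈ C ∧ ∀ x ∈ C, e ≤ x

/-- `Int(B)`, the set of internally active elements of `B`. -/
def IntSet [LinearOrder α] (M : Matroid α) (B : Set α) : Set α := {b | IntActive M B b}

/-- `Ext(B)`, the set of externally active elements of `B`. -/
def ExtSet [LinearOrder α] (M : Matroid α) (B : Set α) : Set α := {e | ExtActive M B e}

end AB

namespace AB
/-- The rank of a set `X` in a matroid `M`: the largest cardinality of an
independent subset of `X`. -/
noncomputable def rank {α : Type*} (M : Matroid α) (X : Set α) : ℕ :=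
  sSup {n : ℕ | ∃ I, I ⊆ X ∧ M.Indep I ∧ I.ncard = n}

/-- Crapo's beta invariant: `β(M) = (-1)^{r(M)} Σ_{A ⊆ E} (-1)^{|A|} r(A)`. -/
noncomputable def beta {α : Type*} [Fintype α] (M : Matroid α) : ℤ :=
  (-1) ^ (rank M M.E) *
    ∑ A ∈ (Finset.univ : Finset α).powerset, (-1) ^ A.card * (rank M ↑A : ℤ)
end AB

attribute [local instance] Classical.propDecidable

/-!
Crapo's proof. For `A ⊆ E`, reorder `E` by listing the elements of `A` first, in decreasing
order, and then the others in increasing order. The base that is optimal for this order under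
single exchanges is unique, and it is exactly the base `B` with
`A ∈ [B \ Int(B), B ∪ Ext(B)]`; so these intervals partition `2^E`. On the interval of `B`
the rank is `A ↦ |A ∩ B|`, and the alternating sum of `|A ∩ B|` over it vanishes unless
`Ext(B) = ∅` and `|Int(B)| = 1`, when it is `(-1)^|B|`. A nonempty base with no active element
cannot occur, because the least element of `E` is always active.
-/

namespace Matroid

open Set
open scoped symmDiff

variable {α : Type*} {M : Matroid α} {B : Set α} {b e : α} {w : α → ℤ}

theorem IsBase.mem_fundCircuit_iff_isBase_exchange (hB : M.IsBase B) (he : e ∈ M.E \ B)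
    (hb : b ∈ B) : b ∈ M.fundCircuit e B ↔ M.IsBase (insert e (B \ {b})) := by
  rw [hB.indep.mem_fundCircuit_iff (by rw [hB.closure_eq]; exact he.1) he.2,
    ← insert_sdiff_singleton_comm (ne_of_mem_of_not_mem hb he.2).symm]
  exact ⟨hB.exchange_isBase_of_indep he.2, IsBase.indep⟩

theorem IsBase.mem_fundCocircuit_iff_isBase_exchange (hB : M.IsBase B) (hb : b ∈ B)
    (he : e ∉ B) : e ∈ M.fundCocircuit b B ↔ M.IsBase (insert e (B \ {b})) := by
  by_cases heE : e ∈ M.E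
  · rw [hB.mem_fundCocircuit_iff_mem_fundCircuit,
      hB.mem_fundCircuit_iff_isBase_exchange ⟨heE, he⟩ hb]
  · refine iff_of_false (fun h => heE ?_) (fun h => heE (h.subset_ground (mem_insert e _)))
    simpa [(ne_of_mem_of_not_mem hb he).symm, he] using M.fundCocircuit_subset_insert_compl b B h

theorem IsBase.eq_of_forall_exchange_lt [Finite α] {B₁ B₂ : Set α} (hB₁ : M.IsBase B₁)
    (hB₂ : M.IsBase B₂)
    (h₁ : ∀ b ∈ B₁, ∀ e ∉ B₁, M.IsBase (insert e (B₁ \ {b})) → w b < w e)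
    (h₂ : ∀ b ∈ B₂, ∀ e ∉ B₂, M.IsBase (insert e (B₂ \ {b})) → w b < w e) : B₁ = B₂ := by
  by_contra hne
  obtain ⟨x, hx, hmax⟩ :=
    Set.exists_max_image (B₁ ∆ B₂) w (toFinite _) (symmDiff_nonempty.mpr hne)
  rcases mem_symmDiff.mp hx with hx | hx
  · obtain ⟨y, hy, hyB⟩ := hB₁.exchange hB₂ hx
    exact (h₁ x hx.1 y hy.2 hyB).not_ge (hmax y (mem_symmDiff.mpr (Or.inr hy)))
  · obtain ⟨y, hy, hyB⟩ := hB₂.exchange hB₁ hx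
    exact (h₂ x hx.1 y hy.2 hyB).not_ge (hmax y (mem_symmDiff.mpr (Or.inl hy)))

theorem exists_isBase_forall_exchange_lt [Fintype α] (M : Matroid α) (hw : w.Injective) :
    ∃ B, M.IsBase B ∧ ∀ b ∈ B, ∀ e ∉ B, M.IsBase (insert e (B \ {b})) → w b < w e := by
  obtain ⟨B, hB, hmin⟩ := Set.exists_min_image {B | M.IsBase B}
    (fun B => ∑ x ∈ B.toFinset, w x) (toFinite _) M.exists_isBase
  refine ⟨B, hB, fun b hb e he hex => ?_⟩
  have hle := hmin _ hex
  simp only [toFinset_insert, toFinset_sdiff, toFinset_singleton] at hle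
  rw [Finset.sum_insert (by simp [he]), Finset.sum_sdiff_eq_sub (by simpa),
    Finset.sum_singleton] at hle
  exact (by linarith : w b ≤ w e).lt_of_ne (hw.ne (ne_of_mem_of_not_mem hb he))

theorem existsUnique_isBase_forall_exchange_lt [Fintype α] (M : Matroid α) (hw : w.Injective) :
    ∃! B, M.IsBase B ∧ ∀ b ∈ B, ∀ e ∉ B, M.IsBase (insert e (B \ {b})) → w b < w e :=
  let ⟨B, hB⟩ := M.exists_isBase_forall_exchange_lt hw
  ⟨B, hB, fun _ hB' => hB'.1.eq_of_forall_exchange_lt hB.1 hB'.2 hB.2⟩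

end Matroid

namespace Finset

variable {α : Type*} [DecidableEq α] {s t u : Finset α}

theorem sum_Icc_neg_one_pow_card (h : s ⊆ t) :
    ∑ A ∈ Icc s t, (-1 : ℤ) ^ #A = if s = t then (-1) ^ #s else 0 := by
  have hdisj : ∀ S ∈ (t \ s).powerset, Disjoint s S := fun S hS =>
    disjoint_sdiff.mono_right (mem_powerset.mp hS)
  rw [Icc_eq_image_powerset h, sum_image fun S hS S' hS' heq => by
    rw [← union_sdiff_cancel_left (hdisj S hS), heq, union_sdiff_cancel_left (hdisj S' hS')]]
  rw [sum_congr rfl fun S hS => by rw [card_union_of_disjoint (hdisj S hS), pow_add], ← mul_sum,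
    sum_powerset_neg_one_pow_card]
  by_cases hst : s = t
  · simp [hst]
  · simpa [hst, sdiff_eq_empty_iff_subset] using fun hts => hst (subset_antisymm h hts)

theorem sum_Icc_neg_one_pow_card_mul_card_inter (hs : s ⊆ t) (hu : u ⊆ t) :
    ∑ A ∈ Icc s t, (-1 : ℤ) ^ #A * #(A ∩ u) =
      ∑ x ∈ u, if insert x s = t then (-1) ^ #t else 0 := by
  calc ∑ A ∈ Icc s t, (-1 : ℤ) ^ #A * #(A ∩ u)
      = ∑ A ∈ Icc s t, ∑ x ∈ u, if x ∈ A then (-1 : ℤ) ^ #A else 0 := by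
        refine sum_congr rfl fun A _ => ?_
        rw [← sum_filter, sum_const, filter_mem_eq_inter, inter_comm, nsmul_eq_mul, mul_comm]
    _ = ∑ x ∈ u, ∑ A ∈ Icc (insert x s) t, (-1 : ℤ) ^ #A := by
        rw [sum_comm]
        refine sum_congr rfl fun x hx => ?_
        rw [← sum_filter]
        congr 1
        ext A
        simp only [mem_filter, mem_Icc, insert_subset_iff]
        tauto
    _ = _ := by
        refine sum_congr rfl fun x hx => ?_
        rw [sum_Icc_neg_one_pow_card (insert_subset (hu hx) hs)]
        split_ifs with h
        · rw [h]
        · rfl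

theorem sum_ite_insert_sdiff_eq_union {M : Type*} [AddCommMonoid M] {B I X : Finset α}
    (hI : I ⊆ B) (hX : Disjoint B X) (hne : B.Nonempty → (I ∪ X).Nonempty) (c : M) :
    ∑ x ∈ B, (if insert x (B \ I) = B ∪ X then c else 0) = if #I = 1 ∧ X = ∅ then c else 0 := by
  have key : ∀ x ∈ B, insert x (B \ I) = B ∪ X ↔ I = {x} ∧ X = ∅ := by
    intro x hx
    constructor
    · intro h
      have hX₀ : X = ∅ := by
        refine eq_empty_of_forall_notMem fun y hy => disjoint_right.mp hX hy ?_
        rcases mem_insert.mp (h ▸ mem_union_right B hy) with rfl | hy'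
        exacts [hx, (mem_sdiff.mp hy').1]
      obtain ⟨a, ha⟩ : I.Nonempty := by simpa [hX₀] using hne ⟨x, hx⟩
      have hIx : ∀ y ∈ I, y = x := fun y hy => by
        have : y ∈ insert x (B \ I) := h ▸ mem_union_left X (hI hy)
        simpa [hy] using this
      exact ⟨eq_singleton_iff_unique_mem.mpr ⟨hIx a ha ▸ ha, hIx⟩, hX₀⟩
    · rintro ⟨rfl, rfl⟩
      rw [union_empty, sdiff_singleton_eq_erase, insert_erase hx]
  rw [sum_congr rfl fun x hx => if_congr (key x hx) rfl rfl]
  by_cases hX₀ : X = ∅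
  · by_cases h₁ : #I = 1
    · obtain ⟨a, rfl⟩ := card_eq_one.mp h₁
      simp [hX₀, hI (mem_singleton_self a)]
    · rw [if_neg fun h => h₁ h.1]
      exact sum_eq_zero fun x _ => if_neg fun h => h₁ (by rw [h.1, card_singleton])
  · simp [hX₀]

end Finset

namespace AB

open Matroid

section Activity

open Set

variable {α : Type*} {M : Matroid α} {A B C : Set α} {b e m : α}

theorem circuit_iff_isCircuit : Circuit M C ↔ M.IsCircuit C := by
  rw [isCircuit_iff_forall_ssubset]; rfl

theorem rank_eq_ncard_of_isBasis [Finite α] {I X : Set α} (hI : M.IsBasis I X) :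
    rank M X = I.ncard := by
  refine IsGreatest.csSup_eq ⟨⟨I, hI.subset, hI.indep, rfl⟩, ?_⟩
  rintro _ ⟨J, hJX, hJ, rfl⟩
  have := (hJ.encard_le_eRk_of_subset hJX).trans_eq hI.encard_eq_eRk.symm
  rwa [← J.toFinite.cast_ncard_eq, ← I.toFinite.cast_ncard_eq, Nat.cast_le] at this

variable [LinearOrder α]

theorem extActive_iff_forall_mem_fundCircuit (hB : M.IsBase B) :
    ExtActive M B e ↔ e ∈ M.E \ B ∧ ∀ x ∈ M.fundCircuit e B, e ≤ x := by
  refine and_congr_right fun he => ⟨?_, fun h => ?_⟩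
  · rintro ⟨C, hC, hCB, -, hmin⟩
    rw [union_singleton] at hCB
    rwa [← (circuit_iff_isCircuit.mp hC).eq_fundCircuit_of_subset hB.indep hCB]
  · exact ⟨_, circuit_iff_isCircuit.mpr (hB.fundCircuit_isCircuit he.1 he.2),
      by rw [union_singleton]; exact M.fundCircuit_subset_insert e B, M.mem_fundCircuit e B, h⟩

theorem intActive_iff_forall_mem_fundCocircuit (hB : M.IsBase B) :
    IntActive M B b ↔ b ∈ B ∧ ∀ x ∈ M.fundCocircuit b B, b ≤ x := by
  have hdual : IntActive M B b ↔ ExtActive M✶ (M.E \ B) b := by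
    simp [IntActive, ExtActive, Cocircuit, sdiff_sdiff_cancel_left hB.subset_ground]
  rw [hdual, extActive_iff_forall_mem_fundCircuit hB.compl_isBase_dual, dual_ground,
    sdiff_sdiff_cancel_left hB.subset_ground]
  rfl

theorem extActive_iff_forall_isBase_exchange (hB : M.IsBase B) :
    ExtActive M B e ↔ e ∈ M.E \ B ∧ ∀ b ∈ B, M.IsBase (insert e (B \ {b})) → e < b := by
  rw [extActive_iff_forall_mem_fundCircuit hB]
  refine and_congr_right fun he => ⟨fun h b hb hex => ?_, fun h x hx => ?_⟩
  · exact (h b ((hB.mem_fundCircuit_iff_isBase_exchange he hb).mpr hex)).lt_of_ne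
      (ne_of_mem_of_not_mem hb he.2).symm
  · obtain rfl | hxB := (mem_insert_iff.mp (M.fundCircuit_subset_insert e B hx))
    · rfl
    · exact (h x hxB ((hB.mem_fundCircuit_iff_isBase_exchange he hxB).mp hx)).le

theorem intActive_iff_forall_isBase_exchange (hB : M.IsBase B) :
    IntActive M B b ↔ b ∈ B ∧ ∀ e ∉ B, M.IsBase (insert e (B \ {b})) → b < e := by
  rw [intActive_iff_forall_mem_fundCocircuit hB]
  refine and_congr_right fun hb => ⟨fun h e he hex => ?_, fun h x hx => ?_⟩
  · exact (h e ((hB.mem_fundCocircuit_iff_isBase_exchange hb he).mpr hex)).lt_of_ne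
      (ne_of_mem_of_not_mem hb he)
  · obtain rfl | hx' := (mem_insert_iff.mp (M.fundCocircuit_subset_insert_compl b B hx))
    · rfl
    · exact (h x hx'.2 ((hB.mem_fundCocircuit_iff_isBase_exchange hb hx'.2).mp hx)).le

theorem intActive_or_extActive_of_isLeast (hB : M.IsBase B) (hm : IsLeast M.E m) :
    IntActive M B m ∨ ExtActive M B m := by
  by_cases hmB : m ∈ B
  · refine .inl ((intActive_iff_forall_isBase_exchange hB).mpr ⟨hmB, fun e he hex => ?_⟩)
    exact (hm.2 (hex.subset_ground (mem_insert e _))).lt_of_ne (ne_of_mem_of_not_mem hmB he)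
  · refine .inr ((extActive_iff_forall_isBase_exchange hB).mpr ⟨⟨hm.1, hmB⟩, fun b hb _ => ?_⟩)
    exact (hm.2 (hB.subset_ground hb)).lt_of_ne (ne_of_mem_of_not_mem hb hmB).symm

/-- `A` lies in Crapo's interval `[B \ Int(B), B ∪ Ext(B)]`. -/
def MemActivityInterval (M : Matroid α) (B A : Set α) : Prop :=
  M.IsBase B ∧ B \ A ⊆ IntSet M B ∧ A \ B ⊆ ExtSet M B

theorem memActivityInterval_iff (hA : A ⊆ M.E) :
    MemActivityInterval M B A ↔ M.IsBase B ∧ ∀ b ∈ B, ∀ e ∉ B,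
      M.IsBase (insert e (B \ {b})) → (b ∉ A → b < e) ∧ (e ∈ A → e < b) := by
  refine and_congr_right fun hB => ?_
  simp only [subset_def, mem_sdiff, IntSet, ExtSet, mem_ofPred_eq,
    intActive_iff_forall_isBase_exchange hB, extActive_iff_forall_isBase_exchange hB]
  constructor
  · rintro ⟨hInt, hExt⟩ b hb e he hex
    exact ⟨fun hbA => (hInt b ⟨hb, hbA⟩).2 e he hex, fun heA => (hExt e ⟨heA, he⟩).2 b hb hex⟩
  · intro h
    exact ⟨fun b hb => ⟨hb.1, fun e he hex => (h b hb.1 e he hex).1 hb.2⟩,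
      fun e he => ⟨⟨hA he.1, he.2⟩, fun b hb hex => (h b hb e he.2 hex).2 he.1⟩⟩

theorem MemActivityInterval.isBasis_inter (h : MemActivityInterval M B A) (hA : A ⊆ M.E) :
    M.IsBasis (A ∩ B) A := by
  obtain ⟨hB, hex⟩ := (memActivityInterval_iff hA).mp h
  refine (hB.indep.inter_left A).isBasis_of_forall_insert inter_subset_left fun z hz => ?_
  have hzB : z ∉ B := fun hzB => hz.2 ⟨hz.1, hzB⟩
  refine (hB.fundCircuit_isCircuit (hA hz.1) hzB).dep.superset (fun y hy => ?_)
    (insert_subset (hA hz.1) (inter_subset_left.trans hA))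
  obtain rfl | hyB := mem_insert_iff.mp (M.fundCircuit_subset_insert z B hy)
  · exact mem_insert _ _
  have hyz :=
    hex y hyB z hzB ((hB.mem_fundCircuit_iff_isBase_exchange ⟨hA hz.1, hzB⟩ hyB).mp hy)
  exact mem_insert_of_mem _ ⟨by_contra fun hyA => (hyz.1 hyA).asymm (hyz.2 hz.1), hyB⟩

variable [Fintype α]

/-- Elements of `A` come first, in decreasing order, followed by the others in increasing order;
a base is optimal for this weight exactly when `A` lies in its activity interval. -/
noncomputable def intervalWeight (A : Set α) (x : α) : ℤ :=
  if x ∈ A then -((Fintype.orderIsoFinOfCardEq α rfl).symm x : ℕ)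
  else Fintype.card α + ((Fintype.orderIsoFinOfCardEq α rfl).symm x : ℕ)

theorem intervalWeight_lt_iff :
    intervalWeight A b < intervalWeight A e ↔ (b ∉ A → b < e) ∧ (e ∈ A → e < b) := by
  unfold intervalWeight
  set f := (Fintype.orderIsoFinOfCardEq α rfl).symm
  have hf : ∀ x y, ((f x : ℕ) : ℤ) < f y ↔ x < y := fun x y => by
    rw [Nat.cast_lt, Fin.val_fin_lt, f.lt_iff_lt]
  have hb := (f b).isLt
  have he := (f e).isLt
  rw [← hf b e, ← hf e b]
  by_cases hbA : b ∈ A <;> by_cases heA : e ∈ A <;>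
    simp only [hbA, heA, if_true, if_false, not_true_eq_false, not_false_eq_true, true_implies,
      false_implies, true_and, and_true, iff_true] <;>
    omega

theorem intervalWeight_injective : (intervalWeight (α := α) A).Injective := by
  intro b e h
  have h₁ := intervalWeight_lt_iff.not.mp h.not_lt
  have h₂ := intervalWeight_lt_iff.not.mp h.symm.not_lt
  by_contra hne
  rcases lt_or_gt_of_ne hne with hlt | hlt <;> have := hlt.not_gt <;> tauto

theorem existsUnique_memActivityInterval (hA : A ⊆ M.E) : ∃! B, MemActivityInterval M B A := by
  simp_rw [memActivityInterval_iff hA, ← intervalWeight_lt_iff]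
  exact M.existsUnique_isBase_forall_exchange_lt intervalWeight_injective

end Activity

section Counting

open Finset

variable {α : Type*} [LinearOrder α] [Fintype α] {M : Matroid α}

noncomputable def activityInterval (M : Matroid α) (B : Finset α) : Finset (Finset α) :=
  Icc (B \ (IntSet M ↑B).toFinset) (B ∪ (ExtSet M ↑B).toFinset)

theorem mem_activityInterval_iff {A B : Finset α} :
    A ∈ activityInterval M B ↔ ↑B \ ↑A ⊆ IntSet M ↑B ∧ ↑A \ ↑B ⊆ ExtSet M ↑B := by
  rw [activityInterval, mem_Icc]
  refine and_congr (sdiff_le_comm.trans ?_) (sdiff_le_iff.symm.trans ?_) <;>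
    rw [← coe_sdiff] <;> exact Set.subset_toFinset

theorem sum_eq_sum_isBase_sum_activityInterval (hE : M.E = Set.univ) (f : Finset α → ℤ) :
    ∑ A, f A =
      ∑ B ∈ univ.filter fun B : Finset α => M.IsBase ↑B, ∑ A ∈ activityInterval M B, f A := by
  have hunique (A : Finset α) :=
    existsUnique_memActivityInterval (M := M) (A := ↑A) (by simp [hE])
  rw [← sum_biUnion]
  · congr
    refine (eq_univ_of_forall fun A => ?_).symm
    obtain ⟨B, ⟨hB, hInt, hExt⟩, -⟩ := hunique A
    refine mem_biUnion.mpr ⟨B.toFinset, ?_, ?_⟩ <;>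
      simp [mem_activityInterval_iff, hB, hInt, hExt]
  · intro B hB B' hB' hne
    refine disjoint_left.mpr fun A hA hA' => hne ?_
    exact_mod_cast (hunique A).unique
      ⟨(mem_filter.mp hB).2, mem_activityInterval_iff.mp hA⟩
      ⟨(mem_filter.mp hB').2, mem_activityInterval_iff.mp hA'⟩

theorem sum_activityInterval_neg_one_pow_card_mul_rank (hE : M.E = Set.univ) {B : Finset α}
    (hB : M.IsBase ↑B) :
    ∑ A ∈ activityInterval M B, (-1 : ℤ) ^ #A * (rank M ↑A : ℤ) =
      if (IntSet M ↑B).ncard = 1 ∧ (ExtSet M ↑B).ncard = 0 then (-1) ^ #B else 0 := by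
  set I := (IntSet M ↑B).toFinset
  set X := (ExtSet M ↑B).toFinset
  have hI : I ⊆ B := fun x hx => (Set.mem_toFinset.mp hx).1
  have hX : Disjoint B X := disjoint_right.mpr fun x hx => (Set.mem_toFinset.mp hx).1.2
  have hne : B.Nonempty → (I ∪ X).Nonempty := fun ⟨x, _⟩ => by
    have : Nonempty α := ⟨x⟩
    obtain ⟨m, hm⟩ := Finite.exists_min (id : α → α)
    have hleast : IsLeast M.E m := hE ▸ ⟨Set.mem_univ m, fun y _ => hm y⟩
    refine ⟨m, mem_union.mpr ?_⟩
    exact (intActive_or_extActive_of_isLeast hB hleast).imp Set.mem_toFinset.mpr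
      Set.mem_toFinset.mpr
  calc ∑ A ∈ activityInterval M B, (-1 : ℤ) ^ #A * (rank M ↑A : ℤ)
      = ∑ A ∈ Icc (B \ I) (B ∪ X), (-1 : ℤ) ^ #A * #(A ∩ B) := by
        refine sum_congr rfl fun A hA => ?_
        have hAB : MemActivityInterval M ↑B ↑A := ⟨hB, mem_activityInterval_iff.mp hA⟩
        rw [rank_eq_ncard_of_isBasis (hAB.isBasis_inter (by simp [hE])), ← coe_inter,
          Set.ncard_coe_finset]
    _ = ∑ x ∈ B, if insert x (B \ I) = B ∪ X then (-1) ^ #(B ∪ X) else 0 :=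
        sum_Icc_neg_one_pow_card_mul_card_inter (sdiff_subset.trans subset_union_left)
          subset_union_left
    _ = if #I = 1 ∧ X = ∅ then (-1) ^ #(B ∪ X) else 0 := sum_ite_insert_sdiff_eq_union hI hX hne _
    _ = _ := by
        simp only [Set.ncard_eq_toFinset_card', card_eq_zero]
        split_ifs with h
        · rw [h.2, union_empty]
        · rfl

end Counting

end AB

/-- For any linear order on the ground set, the number of bases with
internal activity 1 and external activity 0 equals the beta invariant `β(M)`; since
`β(M)` does not mention the order, this number is independent of the chosen linear
order. -/
theorem stmt_16 {α : Type*} [Fintype α] [LinearOrder α] (M : Matroid α)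
    (hE : M.E = Set.univ) :
    ((Finset.univ.powerset.filter (fun B : Finset α =>
        M.IsBase ↑B ∧ (AB.IntSet M ↑B).ncard = 1 ∧ (AB.ExtSet M ↑B).ncard = 0)).card : ℤ)
      = AB.beta M := by
  have hrank (B : Finset α) (hB : M.IsBase ↑B) : AB.rank M M.E = B.card := by
    rw [AB.rank_eq_ncard_of_isBasis hB.isBasis_ground, Set.ncard_coe_finset]
  rw [AB.beta, Finset.powerset_univ, AB.sum_eq_sum_isBase_sum_activityInterval hE,
    Finset.mul_sum, ← Finset.filter_filter, Finset.natCast_card_filter]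
  refine Finset.sum_congr rfl fun B hB => ?_
  have hB := (Finset.mem_filter.mp hB).2
  rw [AB.sum_activityInterval_neg_one_pow_card_mul_rank hE hB, hrank B hB, mul_ite, mul_zero,
    ← mul_pow, neg_one_mul, neg_neg, one_pow]
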